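/- Let f : U → (−1, 1) be a real-valued harmonic function on the unit disk. Then for all z ∈ U, |∇f(z)| ≤ (4/π) cos((π/2) f(z)) / (1 − |z|²). -/

import Mathlib

open Metric Complex
open Set

noncomputable def moeb (c z : ℂ) : ℂ := (z + c) / (1 + (starRingEnd ℂ) c * z)

lemma normSq_moeb_identity (c z : ℂ) :
    Complex.normSq (1 + (starRingEnd ℂ) c * z) - Complex.normSq (z + c)
      = (1 - Complex.normSq z) * (1 - Complex.normSq c) := by
  simp [Complex.normSq_apply, Complex.add_re, Complex.add_im, Complex.mul_re, Complex.mul_im]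
  ring

lemma moeb_den_ne {c z : ℂ} (hc : ‖c‖ < 1) (hz : ‖z‖ < 1) :
    1 + (starRingEnd ℂ) c * z ≠ 0 := by
  intro h
  have h1 : Complex.normSq (1 + (starRingEnd ℂ) c * z) = 0 := by rw [h]; simp
  have h2 := normSq_moeb_identity c z
  have hz2 : Complex.normSq z < 1 := by rw [← Complex.sq_norm]; nlinarith [norm_nonneg z]
  have hc2 : Complex.normSq c < 1 := by rw [← Complex.sq_norm]; nlinarith [norm_nonneg c]
  nlinarith [Complex.normSq_nonneg (z + c)]

lemma moeb_maps {c z : ℂ} (hc : ‖c‖ < 1) (hz : ‖z‖ < 1) :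
    ‖moeb c z‖ < 1 := by
  have hden := moeb_den_ne hc hz
  have h2 := normSq_moeb_identity c z
  have hz2 : Complex.normSq z < 1 := by rw [← Complex.sq_norm]; nlinarith [norm_nonneg z]
  have hc2 : Complex.normSq c < 1 := by rw [← Complex.sq_norm]; nlinarith [norm_nonneg c]
  have hlt : Complex.normSq (z + c) < Complex.normSq (1 + (starRingEnd ℂ) c * z) := by nlinarith
  have : ‖z + c‖ < ‖1 + (starRingEnd ℂ) c * z‖ := by
    have := Complex.sq_norm (z + c)
    have := Complex.sq_norm (1 + (starRingEnd ℂ) c * z)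
    nlinarith [norm_nonneg (z + c), norm_nonneg (1 + (starRingEnd ℂ) c * z)]
  rw [moeb, norm_div]
  rw [div_lt_one (by
    rcases (norm_ne_zero_iff.mpr hden).lt_or_gt with h | h
    · exact absurd h (not_lt.2 (norm_nonneg _))
    · exact h)]
  exact this

lemma hasDerivAt_moeb (c : ℂ) {z : ℂ} (h : 1 + (starRingEnd ℂ) c * z ≠ 0) :
    HasDerivAt (moeb c) ((1 - (starRingEnd ℂ) c * c) / (1 + (starRingEnd ℂ) c * z) ^ 2) z := by
  have h1 : HasDerivAt (fun w : ℂ => w + c) 1 z := (hasDerivAt_id z).add_const c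
  have h2 : HasDerivAt (fun w : ℂ => 1 + (starRingEnd ℂ) c * w) ((starRingEnd ℂ) c) z := by
    simpa using ((hasDerivAt_id z).const_mul ((starRingEnd ℂ) c)).const_add 1
  have := h1.div h2 h
  have e : (1 - (starRingEnd ℂ) c * c) / (1 + (starRingEnd ℂ) c * z) ^ 2 =
      (1 * (1 + (starRingEnd ℂ) c * z) - (z + c) * (starRingEnd ℂ) c) / (1 + (starRingEnd ℂ) c * z) ^ 2 := by
    ring
  rw [e]
  exact this

lemma conj_mul_self (b : ℂ) : (starRingEnd ℂ) b * b = (Complex.normSq b : ℂ) := by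
  rw [mul_comm, Complex.mul_conj]

theorem schwarz_pick {g : ℂ → ℂ} (hd : DifferentiableOn ℂ g (ball 0 1))
    (hm : MapsTo g (ball 0 1) (ball 0 1)) {a : ℂ} (ha : a ∈ ball 0 1) :
    ‖deriv g a‖ * (1 - ‖a‖ ^ 2) ≤ 1 - ‖g a‖ ^ 2 := by
  set b := g a with hbdef
  have haa : ‖a‖ < 1 := by simpa using ha
  have hba : ‖b‖ < 1 := by simpa using hm ha
  have hbn : ‖-b‖ < 1 := by simpa using hba
  -- the composite map
  set h : ℂ → ℂ := fun z => moeb (-b) (g (moeb a z)) with hh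
  have hmapsa : ∀ z ∈ ball (0:ℂ) 1, moeb a z ∈ ball (0:ℂ) 1 := fun z hz => by
    simpa using moeb_maps haa (by simpa using hz)
  have hhd : ∀ z ∈ ball (0:ℂ) 1,
      HasDerivAt h
        (((1 - (starRingEnd ℂ) (-b) * (-b)) / (1 + (starRingEnd ℂ) (-b) * (g (moeb a z))) ^ 2) *
          (deriv g (moeb a z) *
            ((1 - (starRingEnd ℂ) a * a) / (1 + (starRingEnd ℂ) a * z) ^ 2))) z := by
    intro z hz
    have hz1 : ‖z‖ < 1 := by simpa using hz
    have hmz : moeb a z ∈ ball (0:ℂ) 1 := hmapsa z hz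
    have hgmz : ‖g (moeb a z)‖ < 1 := by simpa using hm hmz
    have h1 : HasDerivAt (moeb a) ((1 - (starRingEnd ℂ) a * a) / (1 + (starRingEnd ℂ) a * z) ^ 2) z :=
      hasDerivAt_moeb a (moeb_den_ne haa hz1)
    have h2 : HasDerivAt g (deriv g (moeb a z)) (moeb a z) :=
      (hd.differentiableAt (isOpen_ball.mem_nhds hmz)).hasDerivAt
    have h3 := hasDerivAt_moeb (-b) (moeb_den_ne hbn hgmz)
    exact h3.comp z (h2.comp z h1)
  have hmoeba0 : moeb a 0 = a := by simp [moeb]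
  have hh0 : h 0 = 0 := by
    simp only [hh, hmoeba0, ← hbdef, moeb]
    simp [hbdef]
  have hhdiff : DifferentiableOn ℂ h (ball 0 1) := fun z hz =>
    ((hhd z hz).differentiableAt).differentiableWithinAt
  have hhmaps : MapsTo h (ball (0:ℂ) 1) (ball (0:ℂ) 1) := fun z hz => by
    have := moeb_maps hbn (by simpa using hm (hmapsa z hz))
    simpa using this
  have hsch := Complex.norm_deriv_le_one_of_mapsTo_ball hhdiff
    (by rw [hh0]; exact hhmaps.mono_right ball_subset_closedBall) one_pos
  have hderiv0 := (hhd 0 (by simp)).deriv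
  rw [hderiv0] at hsch
  rw [hmoeba0] at hsch
  -- simplify the value
  have hna : (1 : ℂ) - (starRingEnd ℂ) a * a = ((1 - Complex.normSq a : ℝ) : ℂ) := by
    rw [conj_mul_self]; push_cast; ring
  have hnb : (1 : ℂ) - (starRingEnd ℂ) (-b) * (-b) = ((1 - Complex.normSq b : ℝ) : ℂ) := by
    rw [map_neg, neg_mul_neg, conj_mul_self]
    push_cast; ring
  have hden2 : (1 : ℂ) + (starRingEnd ℂ) (-b) * b = ((1 - Complex.normSq b : ℝ) : ℂ) := by
    rw [map_neg, neg_mul, ← sub_eq_add_neg, conj_mul_self]; push_cast; ring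
  have hden3 : (1 : ℂ) + (starRingEnd ℂ) a * (0:ℂ) = 1 := by simp
  rw [hden3, hna, hnb, hden2] at hsch
  have hnb1 : Complex.normSq b < 1 := by
    rw [← Complex.sq_norm]; nlinarith [norm_nonneg b]
  have hnbpos : (0:ℝ) < 1 - Complex.normSq b := by linarith
  have hna1 : Complex.normSq a < 1 := by
    rw [← Complex.sq_norm]; nlinarith [norm_nonneg a]
  have habs : ‖((1 - Complex.normSq b : ℝ) : ℂ) / ((1 - Complex.normSq b : ℝ) : ℂ) ^ 2 *
      (deriv g a * (((1 - Complex.normSq a : ℝ) : ℂ) / 1 ^ 2))‖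
      = (1 - Complex.normSq b)⁻¹ * (‖deriv g a‖ * (1 - Complex.normSq a)) := by
    have e1 : ‖((1 - Complex.normSq b : ℝ) : ℂ)‖ = 1 - Complex.normSq b := by
      rw [Complex.norm_real, Real.norm_eq_abs]; exact abs_of_pos hnbpos
    have e2 : ‖((1 - Complex.normSq a : ℝ) : ℂ)‖ = 1 - Complex.normSq a := by
      rw [Complex.norm_real, Real.norm_eq_abs]; exact abs_of_pos (by linarith)
    rw [norm_mul, norm_mul, norm_div, norm_div, norm_pow, norm_pow, e1, e2, norm_one, one_pow, div_one]
    field_simp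
  rw [habs] at hsch
  rw [inv_mul_le_iff₀ hnbpos, mul_one] at hsch
  calc ‖deriv g a‖ * (1 - ‖a‖ ^ 2)
      = ‖deriv g a‖ * (1 - Complex.normSq a) := by rw [Complex.sq_norm]
    _ ≤ 1 - Complex.normSq b := hsch
    _ = 1 - ‖g a‖ ^ 2 := by rw [Complex.sq_norm, hbdef]

lemma normSq_sin' (z : ℂ) :
    Complex.normSq (Complex.sin z) = Real.sin z.re ^ 2 + Real.sinh z.im ^ 2 := by
  rw [Complex.sin_eq]
  simp [Complex.normSq_apply, Complex.sin_ofReal_re, Complex.sin_ofReal_im,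
    Complex.cos_ofReal_re, Complex.cos_ofReal_im, Complex.sinh_ofReal_re, Complex.sinh_ofReal_im,
    Complex.cosh_ofReal_re, Complex.cosh_ofReal_im]
  nlinarith [Real.sin_sq_add_cos_sq z.re, Real.cosh_sq z.im]

lemma normSq_cos' (z : ℂ) :
    Complex.normSq (Complex.cos z) = Real.cos z.re ^ 2 + Real.sinh z.im ^ 2 := by
  rw [Complex.cos_eq]
  simp [Complex.normSq_apply, Complex.sin_ofReal_re, Complex.sin_ofReal_im,
    Complex.cos_ofReal_re, Complex.cos_ofReal_im, Complex.sinh_ofReal_re, Complex.sinh_ofReal_im,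
    Complex.cosh_ofReal_re, Complex.cosh_ofReal_im]
  nlinarith [Real.sin_sq_add_cos_sq z.re, Real.cosh_sq z.im]

/-- A real-valued harmonic function on the disk is represented as the real part of a
holomorphic function `F`; then `|∇f(z)| = |F'(z)|`. -/
theorem chen_gradient_cosine (F : ℂ → ℂ)
    (hF : DifferentiableOn ℂ F (ball 0 1))
    (f : ℂ → ℝ)
    (hfF : ∀ z ∈ ball (0:ℂ) 1, f z = (F z).re)
    (hb : ∀ z ∈ ball (0:ℂ) 1, |f z| < 1)
    (z : ℂ) (hz : z ∈ ball (0:ℂ) 1) :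
    ‖deriv F z‖ ≤
      (4 / Real.pi) * Real.cos (Real.pi / 2 * f z) / (1 - ‖z‖ ^ 2) := by
  have pi_pos := Real.pi_pos
  set q : ℂ := ((Real.pi / 4 : ℝ) : ℂ) with hq
  set g : ℂ → ℂ := fun w => Complex.tan (q * F w) with hg
  have hre : ∀ w ∈ ball (0:ℂ) 1, (q * F w).re = Real.pi / 4 * f w := by
    intro w hw
    rw [hfF w hw, hq, Complex.re_ofReal_mul]
  have habsre : ∀ w ∈ ball (0:ℂ) 1, |(q * F w).re| < Real.pi / 4 := by
    intro w hw
    rw [hre w hw, abs_mul, abs_of_pos (by linarith)]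
    have := hb w hw
    nlinarith [abs_nonneg (f w)]
  have hkey : ∀ w ∈ ball (0:ℂ) 1,
      0 < Real.cos (q * F w).re ^ 2 - Real.sin (q * F w).re ^ 2 := by
    intro w hw
    have h1 := abs_lt.1 (habsre w hw)
    have h2 : 0 < Real.cos (2 * (q * F w).re) := by
      apply Real.cos_pos_of_mem_Ioo
      constructor
      · nlinarith
      · nlinarith
    rw [Real.cos_two_mul'] at h2
    exact h2
  have hnc : ∀ w ∈ ball (0:ℂ) 1, 0 < Complex.normSq (Complex.cos (q * F w)) := by
    intro w hw
    rw [normSq_cos']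
    have h1 := abs_lt.1 (habsre w hw)
    have h2 : 0 < Real.cos (q * F w).re := by
      apply Real.cos_pos_of_mem_Ioo
      constructor
      · nlinarith
      · nlinarith
    nlinarith [sq_nonneg (Real.sinh (q * F w).im)]
  have hcosne : ∀ w ∈ ball (0:ℂ) 1, Complex.cos (q * F w) ≠ 0 := by
    intro w hw h
    have := hnc w hw
    rw [h] at this
    simp at this
  have hmaps : Set.MapsTo g (ball (0:ℂ) 1) (ball (0:ℂ) 1) := by
    intro w hw
    have h1 : Complex.normSq (g w) < 1 := by
      rw [hg]
      simp only
      rw [Complex.tan_eq_sin_div_cos, map_div₀, div_lt_one (hnc w hw), normSq_sin', normSq_cos']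
      have := hkey w hw
      linarith
    have h2 : ‖g w‖ < 1 := by
      rw [← Complex.sq_norm] at h1
      nlinarith [norm_nonneg (g w)]
    simpa using h2
  have hder : ∀ w ∈ ball (0:ℂ) 1,
      HasDerivAt g (1 / Complex.cos (q * F w) ^ 2 * (q * deriv F w)) w := by
    intro w hw
    have hFw : HasDerivAt F (deriv F w) w :=
      (hF.differentiableAt (isOpen_ball.mem_nhds hw)).hasDerivAt
    have hinner : HasDerivAt (fun x => q * F x) (q * deriv F w) w := hFw.const_mul q
    exact (Complex.hasDerivAt_tan (hcosne w hw)).comp w hinner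
  have hgd : DifferentiableOn ℂ g (ball 0 1) := fun w hw =>
    ((hder w hw).differentiableAt).differentiableWithinAt
  have hsp := schwarz_pick hgd hmaps hz
  rw [(hder z hz).deriv] at hsp
  have habsder : ‖1 / Complex.cos (q * F z) ^ 2 * (q * deriv F z)‖
      = Real.pi / 4 * ‖deriv F z‖ / Complex.normSq (Complex.cos (q * F z)) := by
    rw [norm_mul, norm_div, norm_one, norm_pow, norm_mul, Complex.sq_norm]
    rw [hq, Complex.norm_real, Real.norm_eq_abs, abs_of_pos (by linarith)]
    ring
  have h2t : Real.pi / 2 * f z = 2 * (q * F z).re := by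
    rw [hre z hz]; ring
  have hgz : 1 - ‖g z‖ ^ 2
      = Real.cos (Real.pi / 2 * f z) / Complex.normSq (Complex.cos (q * F z)) := by
    rw [Complex.sq_norm, hg]
    simp only
    rw [Complex.tan_eq_sin_div_cos, map_div₀, normSq_sin', normSq_cos', h2t,
      Real.cos_two_mul']
    set S := Real.sin (q * F z).re with hS
    set C := Real.cos (q * F z).re with hC
    set H := Real.sinh (q * F z).im with hH
    have hn : C ^ 2 + H ^ 2 ≠ 0 := by
      have := hnc z hz
      rw [normSq_cos', ← hC, ← hH] at this
      exact ne_of_gt this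
    field_simp
    ring
  rw [habsder, hgz] at hsp
  have hz2 : 0 < 1 - ‖z‖ ^ 2 := by
    have h3 : ‖z‖ < 1 := by simpa using hz
    nlinarith [norm_nonneg z]
  have hncz := hnc z hz
  rw [div_mul_eq_mul_div, div_le_div_iff₀ hncz hncz] at hsp
  have h5 : Real.pi / 4 * ‖deriv F z‖ * (1 - ‖z‖ ^ 2)
      ≤ Real.cos (Real.pi / 2 * f z) := le_of_mul_le_mul_right hsp hncz
  rw [le_div_iff₀ hz2, div_mul_eq_mul_div, le_div_iff₀ pi_pos]
  nlinarith [h5]
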